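/- Let X be a compact metric space and f : X → X continuous. If f is distributionally chaotic in some strictly increasing sequence (q_i) of positive integers but f is not distributionally chaotic (DC1), then limsup_{i→∞} (q_{i+1} - q_i) = ∞. -/

import Mathlib

open Filter Set
open scoped Classical

/-- Lower density of times `i < n` with `dist (f^[i] x) (f^[i] y) < t`. -/
noncomputable def ldens {X : Type*} [MetricSpace X] (f : X → X) (x y : X) (t : ℝ) : ℝ :=
  Filter.liminf (fun n : ℕ =>
    (((Finset.range n).filter (fun i => dist (f^[i] x) (f^[i] y) < t)).card : ℝ) / n)
    Filter.atTop

/-- Upper density of times `i < n` with `dist (f^[i] x) (f^[i] y) < t`. -/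
noncomputable def udens {X : Type*} [MetricSpace X] (f : X → X) (x y : X) (t : ℝ) : ℝ :=
  Filter.limsup (fun n : ℕ =>
    (((Finset.range n).filter (fun i => dist (f^[i] x) (f^[i] y) < t)).card : ℝ) / n)
    Filter.atTop

/-- Lower density along the sequence of times `q i`. -/
noncomputable def ldensSeq {X : Type*} [MetricSpace X] (f : X → X) (q : ℕ → ℕ)
    (x y : X) (t : ℝ) : ℝ :=
  Filter.liminf (fun n : ℕ =>
    (((Finset.range n).filter (fun i => dist (f^[q i] x) (f^[q i] y) < t)).card : ℝ) / n)
    Filter.atTop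

/-- Upper density along the sequence of times `q i`. -/
noncomputable def udensSeq {X : Type*} [MetricSpace X] (f : X → X) (q : ℕ → ℕ)
    (x y : X) (t : ℝ) : ℝ :=
  Filter.limsup (fun n : ℕ =>
    (((Finset.range n).filter (fun i => dist (f^[q i] x) (f^[q i] y) < t)).card : ℝ) / n)
    Filter.atTop

/-- f is distributionally chaotic (DC1). -/
def DC1 {X : Type*} [MetricSpace X] (f : X → X) : Prop :=
  ∃ S : Set X, ¬ S.Countable ∧ ∀ x ∈ S, ∀ y ∈ S, x ≠ y →
    (∃ ε : ℝ, 0 < ε ∧ ldens f x y ε = 0) ∧ ∀ t : ℝ, 0 < t → udens f x y t = 1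

/-- f is distributionally chaotic in the sequence q. -/
def SDCin {X : Type*} [MetricSpace X] (f : X → X) (q : ℕ → ℕ) : Prop :=
  ∃ S : Set X, ¬ S.Countable ∧ ∀ x ∈ S, ∀ y ∈ S, x ≠ y →
    (∃ ε : ℝ, 0 < ε ∧ ldensSeq f q x y ε = 0) ∧ ∀ t : ℝ, 0 < t → udensSeq f q x y t = 1

/-!
If the gaps `q (i + 1) - q i` were bounded by `M`, then, `X` being compact, the iterates
`f, …, f^M` are equicontinuous, so `δ`-closeness of an orbit pair at one time forces
`t`-closeness throughout the neighbouring gap. Counting times block by block over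
`[q i, q (i + 1))`, the number of "close" (resp. "far") times below `q n` is at most
`q 0 + M k`, where `k` counts such indices below `n`; as `n ≤ q n`, zero lower density along `q`
transfers to all times. Hence a DC set along `q` is already a DC1 set.
-/

open Nat

section Counting

variable (p : ℕ → Prop) [DecidablePred p]

noncomputable def partialDensity (n : ℕ) : ℝ := (count p n : ℝ) / n

lemma partialDensity_nonneg (n : ℕ) : 0 ≤ partialDensity p n := by
  unfold partialDensity; positivity

lemma partialDensity_le_one (n : ℕ) : partialDensity p n ≤ 1 :=
  div_le_one_of_le₀ (by exact_mod_cast count_le p) n.cast_nonneg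

lemma count_add_count_not (n : ℕ) : count p n + count (¬p ·) n = n := by
  simpa only [count_eq_card_filter_range, Finset.card_range]
    using Finset.card_filter_add_card_filter_not (s := Finset.range n) p

lemma partialDensity_not {n : ℕ} (hn : 0 < n) :
    partialDensity (¬p ·) n = 1 - partialDensity p n := by
  rw [partialDensity, partialDensity, eq_sub_iff_add_eq, ← add_div,
    div_eq_one_iff_eq (by positivity)]
  exact_mod_cast (add_comm _ _).trans (count_add_count_not p n)

lemma count_shift_le (n : ℕ) : count (fun k => p (k + 1)) n ≤ count p n + 1 := by
  have h₁ := count_succ p n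
  have h₂ := count_succ' p n
  split_ifs at h₁ h₂ <;> omega

end Counting

lemma liminf_eq_zero_iff_frequently_lt {ι : Type*} {l : Filter ι} [l.NeBot] {u : ι → ℝ}
    (h₀ : ∀ i, 0 ≤ u i) (h₁ : ∀ i, u i ≤ 1) :
    liminf u l = 0 ↔ ∀ δ > 0, ∃ᶠ i in l, u i < δ := by
  have hbdd : IsBoundedUnder (· ≤ ·) l u := isBoundedUnder_of ⟨1, h₁⟩
  have hbdd' : IsBoundedUnder (· ≥ ·) l u := isBoundedUnder_of ⟨0, h₀⟩
  constructor
  · intro h δ hδ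
    exact frequently_lt_of_liminf_lt hbdd.isCoboundedUnder_ge (h ▸ hδ)
  · intro h
    refine le_antisymm (le_of_forall_pos_le_add fun δ hδ => ?_)
      (le_liminf_of_le hbdd.isCoboundedUnder_ge (.of_forall h₀))
    rw [zero_add]
    exact liminf_le_of_frequently_le ((h δ hδ).mono fun _ => le_of_lt) hbdd'

lemma limsup_partialDensity_eq_one_iff (p : ℕ → Prop) [DecidablePred p] :
    limsup (partialDensity p) atTop = 1 ↔ liminf (partialDensity (¬p ·)) atTop = 0 := by
  have hsub : liminf (partialDensity (¬p ·)) atTop = 1 - limsup (partialDensity p) atTop := by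
    rw [liminf_congr ((eventually_gt_atTop 0).mono fun _ => partialDensity_not p)]
    exact ((antitone_const_tsub.map_limsup_of_continuousAt (partialDensity p)
      (continuous_sub_left 1).continuousAt (isBoundedUnder_of ⟨1, partialDensity_le_one p⟩)
      (isBoundedUnder_of ⟨0, partialDensity_nonneg p⟩).isCoboundedUnder_le)).symm
  rw [hsub]
  constructor <;> intro h <;> linarith

lemma count_le_add_mul_count_of_gap_le {p p' : ℕ → Prop} [DecidablePred p] [DecidablePred p']
    {q : ℕ → ℕ} {M : ℕ} (hgap : ∀ i, q (i + 1) - q i ≤ M)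
    (hp : ∀ i m, q i ≤ m → m < q (i + 1) → p m → p' i) (n : ℕ) :
    count p (q n) ≤ q 0 + M * count p' n := by
  induction n with
  | zero => simpa using count_le p
  | succ n ih =>
    have hsplit : count p (q (n + 1)) ≤
        count p (q n) + count (fun k => p (q n + k)) (q (n + 1) - q n) :=
      (count_add p _ _).symm ▸ count_monotone p (by omega)
    have hblock : count (fun k => p (q n + k)) (q (n + 1) - q n) ≤
        M * if p' n then 1 else 0 := by
      split_ifs with h
      · exact (mul_one M).symm ▸ (count_le _).trans (hgap n)
      · exact (count_of_forall_not fun k hk hpk => h (hp n _ (by omega) (by omega) hpk)).le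
    rw [count_succ, mul_add]
    omega

lemma liminf_partialDensity_eq_zero_of_count_le {p p' : ℕ → Prop} [DecidablePred p]
    [DecidablePred p'] {q : ℕ → ℕ} (hq : ∀ n, n ≤ q n) {B M : ℕ}
    (hcount : ∀ n, count p (q n) ≤ B + M * count p' n)
    (h' : liminf (partialDensity p') atTop = 0) : liminf (partialDensity p) atTop = 0 := by
  rw [liminf_eq_zero_iff_frequently_lt (partialDensity_nonneg p') (partialDensity_le_one p')]
    at h'
  rw [liminf_eq_zero_iff_frequently_lt (partialDensity_nonneg p) (partialDensity_le_one p)]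
  intro δ hδ
  have hB : ∀ᶠ n : ℕ in atTop, (B : ℝ) / n < δ / 2 :=
    (tendsto_const_div_atTop_nhds_zero_nat (B : ℝ)).eventually (gt_mem_nhds (half_pos hδ))
  refine (tendsto_atTop_mono hq tendsto_id).frequently
    ((h' (δ / (2 * (M + 1))) (by positivity)).and_eventually
      (hB.and (eventually_gt_atTop 0)) |>.mono ?_)
  rintro n ⟨hp', hBn, hn⟩
  have hn' : (0 : ℝ) < n := by exact_mod_cast hn
  have hM : (M : ℝ) * partialDensity p' n ≤ δ / 2 :=
    calc (M : ℝ) * partialDensity p' n ≤ (M + 1) * (δ / (2 * (M + 1))) := by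
          gcongr
          · exact partialDensity_nonneg p' n
          · linarith
      _ = δ / 2 := by field_simp
  calc partialDensity p (q n) ≤ ((B + M * count p' n : ℕ) : ℝ) / n :=
        div_le_div₀ (by positivity) (by exact_mod_cast hcount n) hn' (by exact_mod_cast hq n)
    _ = B / n + M * partialDensity p' n := by rw [partialDensity]; push_cast; ring
    _ < δ := by linarith

lemma exists_pos_dist_iterate_lt {X : Type*} [MetricSpace X] [CompactSpace X] {f : X → X}
    (hf : Continuous f) (M : ℕ) {t : ℝ} (ht : 0 < t) :
    ∃ δ > 0, ∀ x y m m', m ≤ m' → m' ≤ m + M →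
      dist (f^[m] x) (f^[m] y) < δ → dist (f^[m'] x) (f^[m'] y) < t := by
  let F : X → Fin (M + 1) → X := fun a j => f^[j] a
  have hF : UniformContinuous F :=
    CompactSpace.uniformContinuous_of_continuous (continuous_pi fun j => hf.iterate j)
  obtain ⟨δ, hδ, hFδ⟩ := Metric.uniformContinuous_iff.mp hF t ht
  refine ⟨δ, hδ, fun x y m m' h₁ h₂ hxy => ?_⟩
  obtain ⟨j, rfl⟩ := Nat.exists_eq_add_of_le h₁
  have hj : j < M + 1 := by omega
  rw [add_comm, Function.iterate_add_apply, Function.iterate_add_apply]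
  exact (dist_le_pi_dist (F (f^[m] x)) (F (f^[m] y)) ⟨j, hj⟩).trans_lt (hFδ hxy)

lemma exists_forall_le_of_limsup_ne_top {u : ℕ → ℕ}
    (h : limsup (fun i => (u i : ℕ∞)) atTop ≠ ⊤) : ∃ M, ∀ i, u i ≤ M := by
  obtain ⟨K, hK⟩ := ENat.ne_top_iff_exists.mp h
  have hlt : limsup (fun i => (u i : ℕ∞)) atTop < (K + 1 : ℕ) := by
    rw [← hK]; exact_mod_cast K.lt_add_one
  obtain ⟨i₀, hi₀⟩ := eventually_atTop.mp (eventually_lt_of_limsup_lt hlt)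
  refine ⟨K + ∑ i ∈ Finset.range i₀, u i, fun i => ?_⟩
  rcases le_or_gt i₀ i with hi | hi
  · have : u i < K + 1 := by exact_mod_cast hi₀ i hi
    omega
  · have := Finset.single_le_sum (fun j _ => Nat.zero_le (u j)) (Finset.mem_range.mpr hi)
    omega

section Dynamics

variable {X : Type*} [MetricSpace X] {f : X → X} {q : ℕ → ℕ} {x y : X}

lemma ldens_eq_liminf (t : ℝ) :
    ldens f x y t = liminf (partialDensity fun i => dist (f^[i] x) (f^[i] y) < t) atTop := by
  unfold ldens partialDensity; simp only [count_eq_card_filter_range]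

lemma udens_eq_limsup (t : ℝ) :
    udens f x y t = limsup (partialDensity fun i => dist (f^[i] x) (f^[i] y) < t) atTop := by
  unfold udens partialDensity; simp only [count_eq_card_filter_range]

lemma ldensSeq_eq_liminf (t : ℝ) : ldensSeq f q x y t =
    liminf (partialDensity fun i => dist (f^[q i] x) (f^[q i] y) < t) atTop := by
  unfold ldensSeq partialDensity; simp only [count_eq_card_filter_range]

lemma udensSeq_eq_limsup (t : ℝ) : udensSeq f q x y t =
    limsup (partialDensity fun i => dist (f^[q i] x) (f^[q i] y) < t) atTop := by
  unfold udensSeq partialDensity; simp only [count_eq_card_filter_range]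

variable [CompactSpace X] {M : ℕ}

lemma exists_ldens_eq_zero_of_ldensSeq_eq_zero (hf : Continuous f) (hq : ∀ n, n ≤ q n)
    (hgap : ∀ i, q (i + 1) - q i ≤ M) {ε : ℝ} (hε : 0 < ε) (h : ldensSeq f q x y ε = 0) :
    ∃ ε' > 0, ldens f x y ε' = 0 := by
  obtain ⟨δ, hδ, hclose⟩ := exists_pos_dist_iterate_lt hf M hε
  refine ⟨δ, hδ, ?_⟩
  rw [ldensSeq_eq_liminf] at h
  rw [ldens_eq_liminf]
  refine liminf_partialDensity_eq_zero_of_count_le hq (B := q 0 + M) (M := M) (fun n => ?_) h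
  calc _ ≤ q 0 + M * count (fun i => dist (f^[q (i + 1)] x) (f^[q (i + 1)] y) < ε) n :=
        count_le_add_mul_count_of_gap_le hgap (fun i m _ hm hδm =>
          hclose x y m (q (i + 1)) hm.le (by have := hgap i; omega) hδm) n
    _ ≤ q 0 + M * (count (fun i => dist (f^[q i] x) (f^[q i] y) < ε) n + 1) := by
        gcongr
        exact count_shift_le (fun i => dist (f^[q i] x) (f^[q i] y) < ε) n
    _ = _ := by ring

lemma udens_eq_one_of_udensSeq_eq_one (hf : Continuous f) (hq : ∀ n, n ≤ q n)
    (hgap : ∀ i, q (i + 1) - q i ≤ M) (h : ∀ t : ℝ, 0 < t → udensSeq f q x y t = 1) :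
    ∀ t : ℝ, 0 < t → udens f x y t = 1 := by
  intro t ht
  obtain ⟨δ, hδ, hclose⟩ := exists_pos_dist_iterate_lt hf M ht
  have hδq := h δ hδ
  rw [udensSeq_eq_limsup, limsup_partialDensity_eq_one_iff] at hδq
  rw [udens_eq_limsup, limsup_partialDensity_eq_one_iff]
  refine liminf_partialDensity_eq_zero_of_count_le hq (B := q 0) (M := M) (fun n => ?_) hδq
  exact count_le_add_mul_count_of_gap_le hgap (fun i m hm _ hfar hδi =>
    hfar (hclose x y (q i) m hm (by have := hgap i; omega) hδi)) n

theorem DC1_of_SDCin_of_gap_le (hf : Continuous f) (hq : ∀ n, n ≤ q n)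
    (hgap : ∀ i, q (i + 1) - q i ≤ M) (h : SDCin f q) : DC1 f := by
  obtain ⟨S, hS, hSq⟩ := h
  refine ⟨S, hS, fun x hx y hy hxy => ?_⟩
  obtain ⟨⟨ε, hε, hl⟩, hu⟩ := hSq x hx y hy hxy
  obtain ⟨ε', hε', hl'⟩ := exists_ldens_eq_zero_of_ldensSeq_eq_zero hf hq hgap hε hl
  exact ⟨⟨ε', hε', hl'⟩, udens_eq_one_of_udensSeq_eq_one hf hq hgap hu⟩

end Dynamics

theorem stmt_18_general {X : Type*} [MetricSpace X] [CompactSpace X]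
    (f : X → X) (hf : Continuous f)
    (q : ℕ → ℕ) (hq : StrictMono q)
    (h1 : SDCin f q) (h2 : ¬ DC1 f) :
    Filter.limsup (fun i : ℕ => ((q (i + 1) - q i : ℕ) : ℕ∞)) Filter.atTop = ⊤ := by
  by_contra hgaps
  obtain ⟨M, hM⟩ := exists_forall_le_of_limsup_ne_top hgaps
  exact h2 (DC1_of_SDCin_of_gap_le hf (fun _ => hq.le_apply) hM h1)

theorem stmt_18 {X : Type*} [MetricSpace X] [CompactSpace X]
    (f : X → X) (hf : Continuous f)
    (q : ℕ → ℕ) (hq : StrictMono q) (hqpos : ∀ i, 0 < q i)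
    (h1 : SDCin f q) (h2 : ¬ DC1 f) :
    Filter.limsup (fun i : ℕ => ((q (i + 1) - q i : ℕ) : ℕ∞)) Filter.atTop = ⊤ :=
  stmt_18_general f hf q hq h1 h2
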